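/- Let D be a decoherence map on a nonempty compact convex set Ω in a finite-dimensional real vector space V, and let s_i, s_j be extreme points of D(Ω). Suppose there are linear functionals E_i, E_j : V → ℝ, each nonnegative on Ω, with {s ∈ Ω | E_i(s) = 0} = Ref(s_i) and {s ∈ Ω | E_j(s) = 0} = Ref(s_j). If the linear span of Ref(s_i) equals the linear span of Ref(s_j), then s_i = s_j. -/

import Mathlib

/-! Since `si` refines itself, it lies in the span of `Ref(si) = Ref(sj)`, on which `Ej` vanishes;
so `si ∈ Ref(sj)`. Applying the idempotent `D` transports the refinement `si ≻ sj` into `D(Ω)`,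
where `sj` is extreme, and an extreme point is refined only by itself. -/

/-- `s` refines `x` (written `s ≻ x`) relative to the convex set `Ω`:
there exist `p ∈ (0,1]` and `t ∈ Ω` with `x = p • s + (1-p) • t`. -/
def Refines {V : Type*} [AddCommGroup V] [Module ℝ V] (Ω : Set V) (s x : V) : Prop :=
  ∃ p : ℝ, 0 < p ∧ p ≤ 1 ∧ ∃ t ∈ Ω, x = p • s + (1 - p) • t

/-- The refinement set of `x` in `Ω`: all states of `Ω` refining `x`. -/
def RefSet {V : Type*} [AddCommGroup V] [Module ℝ V] (Ω : Set V) (x : V) : Set V :=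
  {s ∈ Ω | Refines Ω s x}

/-- `F` is a face of `Ω`: a convex subset of `Ω` closed under refinement. -/
def IsFaceOf {V : Type*} [AddCommGroup V] [Module ℝ V] (F Ω : Set V) : Prop :=
  F ⊆ Ω ∧ Convex ℝ F ∧ ∀ s' ∈ F, ∀ s ∈ Ω, Refines Ω s s' → s ∈ F

/-- A decoherence map on `Ω`: a linear map sending `Ω` into itself, idempotent
on `Ω`, and purity-decreasing (if `D ρ ≻ ρ` then `ρ ≻ D ρ`). -/
def IsDecoherence {V : Type*} [AddCommGroup V] [Module ℝ V]
    (Ω : Set V) (D : V →ₗ[ℝ] V) : Prop :=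
  D '' Ω ⊆ Ω ∧ (∀ s ∈ Ω, D (D s) = D s) ∧
    ∀ ρ ∈ Ω, Refines Ω (D ρ) ρ → Refines Ω ρ (D ρ)

section Refines

variable {V W : Type*} [AddCommGroup V] [Module ℝ V] [AddCommGroup W] [Module ℝ W]

theorem refines_self {Ω : Set V} {x : V} (hx : x ∈ Ω) : Refines Ω x x :=
  ⟨1, one_pos, le_rfl, x, hx, by simp⟩

theorem mem_refSet_self {Ω : Set V} {x : V} (hx : x ∈ Ω) : x ∈ RefSet Ω x :=
  ⟨hx, refines_self hx⟩

theorem Refines.image {Ω : Set V} {s x : V} (f : V →ₗ[ℝ] W) (h : Refines Ω s x) :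
    Refines (f '' Ω) (f s) (f x) := by
  obtain ⟨p, hp0, hp1, t, ht, rfl⟩ := h
  exact ⟨p, hp0, hp1, f t, Set.mem_image_of_mem f ht, by simp⟩

theorem Refines.eq_of_mem_extremePoints {Ω : Set V} {s x : V} (h : Refines Ω s x) (hs : s ∈ Ω)
    (hx : x ∈ Ω.extremePoints ℝ) : s = x := by
  obtain ⟨p, hp0, hp1, t, ht, hxeq⟩ := h
  rcases hp1.eq_or_lt with rfl | hp1
  · simpa using hxeq.symm
  · exact hx.2 hs ht ⟨p, 1 - p, hp0, sub_pos.2 hp1, add_sub_cancel p 1, hxeq.symm⟩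

theorem mem_refSet_of_mem_span {Ω : Set V} {s x : V} {E : V →ₗ[ℝ] ℝ}
    (hE : {y ∈ Ω | E y = 0} = RefSet Ω s) (hx : x ∈ Ω)
    (hspan : x ∈ Submodule.span ℝ (RefSet Ω s)) : x ∈ RefSet Ω s := by
  have hker : RefSet Ω s ⊆ LinearMap.ker E := fun y hy ↦ (hE.symm ▸ hy : y ∈ {y ∈ Ω | E y = 0}).2
  rw [← hE]
  exact ⟨hx, Submodule.span_le.2 hker hspan⟩

end Refines

theorem IsDecoherence.apply_eq_self {V : Type*} [AddCommGroup V] [Module ℝ V] {Ω : Set V}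
    {D : V →ₗ[ℝ] V} (hD : IsDecoherence Ω D) {s : V} (hs : s ∈ D '' Ω) : D s = s := by
  obtain ⟨x, hx, rfl⟩ := hs
  exact hD.2.1 x hx

theorem eq_of_span_refSet_eq_general {V : Type*} [NormedAddCommGroup V]
    [NormedSpace ℝ V]
    (Ω : Set V)
    (D : V →ₗ[ℝ] V) (hD : IsDecoherence Ω D)
    (si sj : V) (hsi : si ∈ (D '' Ω).extremePoints ℝ) (hsj : sj ∈ (D '' Ω).extremePoints ℝ)
    (Ej : V →ₗ[ℝ] ℝ)
    (hEj : {x ∈ Ω | Ej x = 0} = RefSet Ω sj)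
    (hspan : Submodule.span ℝ (RefSet Ω si) = Submodule.span ℝ (RefSet Ω sj)) :
    si = sj := by
  have hsiΩ : si ∈ Ω := hD.1 hsi.1
  have hsi_ref_sj : si ∈ RefSet Ω sj :=
    mem_refSet_of_mem_span hEj hsiΩ (hspan ▸ Submodule.subset_span (mem_refSet_self hsiΩ))
  have hD_ref : Refines (D '' Ω) (D si) (D sj) := hsi_ref_sj.2.image D
  rw [hD.apply_eq_self hsi.1, hD.apply_eq_self hsj.1] at hD_ref
  exact hD_ref.eq_of_mem_extremePoints hsi.1 hsj

/-- if the refinement sets of two extreme points of `D '' Ω` are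
exposed (zero sets of linear functionals nonnegative on `Ω`) and have equal
linear spans, then the extreme points coincide. -/
theorem eq_of_span_refSet_eq {V : Type*} [NormedAddCommGroup V]
    [NormedSpace ℝ V] [FiniteDimensional ℝ V]
    (Ω : Set V) (hne : Ω.Nonempty) (hcomp : IsCompact Ω) (hconv : Convex ℝ Ω)
    (D : V →ₗ[ℝ] V) (hD : IsDecoherence Ω D)
    (si sj : V) (hsi : si ∈ (D '' Ω).extremePoints ℝ) (hsj : sj ∈ (D '' Ω).extremePoints ℝ)
    (Ei Ej : V →ₗ[ℝ] ℝ)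
    (hEipos : ∀ x ∈ Ω, 0 ≤ Ei x) (hEjpos : ∀ x ∈ Ω, 0 ≤ Ej x)
    (hEi : {x ∈ Ω | Ei x = 0} = RefSet Ω si)
    (hEj : {x ∈ Ω | Ej x = 0} = RefSet Ω sj)
    (hspan : Submodule.span ℝ (RefSet Ω si) = Submodule.span ℝ (RefSet Ω sj)) :
    si = sj :=
  eq_of_span_refSet_eq_general Ω D hD si sj hsi hsj Ej hEj hspan
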